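/- arXiv:1812.02573 — 2 statements merged into one kernel-verified Lean document; each statement's English description precedes it below -/
import Mathlib

section
/- Let Z be a real-valued random variable with mean 0 that is 1/2-subgaussian, i.e. E[exp(r·Z)] ≤ exp(r²/8) for all real r. Let (Z_i)_{i∈ℕ} be i.i.d. copies of Z on a probability space Ω, let μ̂_n = (1/n)∑_{i=1}^n Z_i, and let J be a stopping time with values in ℕ ∪ {∞} with respect to the filtration generated by the samples (Z_i). Fix a constant b > 0 and define ε_b(n) = sqrt(((3/5)·log(log_{11/10}(n) + 1) + b)/n) and δ_b = 24·exp(−9b/5). Then Pr[J < ∞ and |μ̂_J| ≥ ε_b(J)] ≤ δ_b. -/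
/-!
Peeling argument. Cut time into the epochs `(11/10)^k ≤ n < (11/10)^(k+1)` and put
`c_k = (3/5) log (k+1) + b`. If `|μ̂_n| ≥ ε_b(n)` for some `n` in epoch `k`, then the partial sum
`S_n` reaches `t_k = √((11/10)^k c_k)` in absolute value before the epoch ends at
`N_k ≤ (11/10)^(k+1)`. As `exp (l S_n)` is a nonnegative submartingale, Doob's maximal inequality
and the subgaussian bound on its mean give probability at most
`2 exp (-2 t_k² / N_k) ≤ 2 exp (-(20/11) c_k) = 2 (k+1)^(-12/11) exp (-(20/11) b)`,
and a union bound over the epochs, with `∑ (k+1)^(-12/11) ≤ 12`, gives `24 exp (-9b/5)`.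
-/

open MeasureTheory ProbabilityTheory

/-- The adaptive confidence radius `ε_b(n) = sqrt(((3/5)·log(log_{11/10}(n) + 1) + b)/n)`. -/
noncomputable def epsb (b : ℝ) (n : ℕ) : ℝ :=
  Real.sqrt (((3 / 5) * Real.log (Real.log n / Real.log (11 / 10) + 1) + b) / n)

/-- The empirical mean `μ̂_n = (1/n) ∑_{i=1}^n Z_i`. -/
noncomputable def muhat {Ω : Type*} (Z : ℕ → Ω → ℝ) (n : ℕ) (ω : Ω) : ℝ :=
  (1 / n : ℝ) * ∑ i ∈ Finset.Icc 1 n, Z i ω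

open Real Finset
open scoped NNReal ENNReal

section Maximal

variable {Ω : Type*} [MeasurableSpace Ω] {μ : Measure Ω} [IsProbabilityMeasure μ]

lemma one_le_mgf_of_integral_eq_zero {Y : Ω → ℝ} {t : ℝ} (hY : Integrable Y μ)
    (hexp : Integrable (fun ω => exp (t * Y ω)) μ) (h0 : μ[Y] = 0) : 1 ≤ mgf Y μ t :=
  calc (1 : ℝ) = ∫ ω, (1 + t * Y ω) ∂μ := by
        rw [integral_add (integrable_const 1) (hY.const_mul t), integral_const_mul, h0]; simp
    _ ≤ mgf Y μ t :=
        integral_mono ((integrable_const 1).add (hY.const_mul t)) hexp fun ω => by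
          linarith [add_one_le_exp (t * Y ω)]

variable {X : ℕ → Ω → ℝ}

lemma ProbabilityTheory.iIndepFun.submartingale_exp_mul_sum (hmeas : ∀ i, Measurable (X i))
    (hindep : iIndepFun X μ) (hint : ∀ i, Integrable (X i) μ) (hmean : ∀ i, μ[X i] = 0)
    {l : ℝ} (hexp : ∀ i, Integrable (fun ω => exp (l * X i ω)) μ) :
    Submartingale (fun n ω => exp (l * ∑ i ∈ Icc 1 n, X i ω))
      (Filtration.natural X fun i => (hmeas i).stronglyMeasurable) μ := by
  set 𝒢 := Filtration.natural X fun i => (hmeas i).stronglyMeasurable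
  have hsum_int : ∀ n, Integrable (fun ω => exp (l * ∑ i ∈ Icc 1 n, X i ω)) μ := fun n => by
    simpa [Finset.sum_apply] using
      hindep.integrable_exp_mul_sum hmeas (s := Icc 1 n) fun i _ => hexp i
  have hadapted : StronglyAdapted 𝒢 (fun n ω => exp (l * ∑ i ∈ Icc 1 n, X i ω)) := by
    intro n
    have hX : ∀ i ≤ n, Measurable[𝒢 n] (X i) := fun i hi =>
      ((Filtration.stronglyAdapted_natural (fun i => (hmeas i).stronglyMeasurable) i).mono
        (𝒢.mono hi)).measurable
    exact (measurable_exp.comp (measurable_const.mul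
      (measurable_sum _ fun i hi => hX i (mem_Icc.mp hi).2))).stronglyMeasurable
  refine submartingale_nat hadapted hsum_int fun n => ?_
  have hsplit : (fun ω => exp (l * ∑ i ∈ Icc 1 (n + 1), X i ω))
      = (fun ω => exp (l * ∑ i ∈ Icc 1 n, X i ω)) * fun ω => exp (l * X (n + 1) ω) := by
    ext ω
    rw [sum_Icc_succ_top (by omega), Pi.mul_apply, ← exp_add, mul_add]
  have hindep_next : μ[fun ω => exp (l * X (n + 1) ω) | 𝒢 n] =ᵐ[μ] fun _ => mgf (X (n + 1)) μ l :=
    condExp_indep_eq ((hmeas (n + 1)).comap_le) (𝒢.le n)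
      (measurable_exp.comp (measurable_const.mul (comap_measurable (X (n + 1))))).stronglyMeasurable
      (hindep.indep_comap_natural_of_lt _ (Nat.lt_succ_self n))
  rw [hsplit]
  filter_upwards [condExp_mul_of_stronglyMeasurable_left (hadapted n)
    (hsplit ▸ hsum_int (n + 1)) (hexp (n + 1)), hindep_next] with ω hpull hconst
  rw [hpull, Pi.mul_apply, hconst]
  exact le_mul_of_one_le_right (exp_pos _).le
    (one_le_mgf_of_integral_eq_zero (hint _) (hexp _) (hmean _))

lemma measure_exists_sum_ge_le_exp_mul (hmeas : ∀ i, Measurable (X i)) (hindep : iIndepFun X μ)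
    {c : ℝ≥0} (hsub : ∀ i, HasSubgaussianMGF (X i) c μ) (hmean : ∀ i, μ[X i] = 0)
    (N : ℕ) (t : ℝ) {l : ℝ} (hl : 0 ≤ l) :
    μ {ω | ∃ n ≤ N, t ≤ ∑ i ∈ Icc 1 n, X i ω}
      ≤ ENNReal.ofReal (exp (-(l * t) + N * c * l ^ 2 / 2)) := by
  set f : ℕ → Ω → ℝ := fun n ω => exp (l * ∑ i ∈ Icc 1 n, X i ω)
  set ε : ℝ≥0 := (exp (l * t)).toNNReal
  have hε : (ε : ℝ) = exp (l * t) := Real.coe_toNNReal _ (exp_pos _).le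
  have hdoob := maximal_ineq (hindep.submartingale_exp_mul_sum hmeas (fun i => (hsub i).integrable)
    hmean fun i => (hsub i).integrable_exp_mul l) (fun n ω => (exp_pos _).le) (ε := ε) N
  have hsubset : {ω | ∃ n ≤ N, t ≤ ∑ i ∈ Icc 1 n, X i ω}
      ⊆ {ω | (ε : ℝ) ≤ (range (N + 1)).sup' nonempty_range_add_one fun k => f k ω} := by
    rintro ω ⟨n, hn, hle⟩
    rw [Set.mem_ofPred_eq, hε]
    exact le_sup'_of_le _ (mem_range.mpr (Nat.lt_succ_of_le hn))
      (exp_le_exp.mpr (mul_le_mul_of_nonneg_left hle hl))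
  have hsum := HasSubgaussianMGF.sum_of_iIndepFun hindep (s := Icc 1 N) fun i _ => hsub i
  have hmgf : ∫ ω, f N ω ∂μ ≤ exp (N * c * l ^ 2 / 2) := by
    simpa [mgf, f] using hsum.mgf_le l
  have hbound : (ε : ℝ≥0∞) * μ {ω | ∃ n ≤ N, t ≤ ∑ i ∈ Icc 1 n, X i ω}
      ≤ ENNReal.ofReal (exp (N * c * l ^ 2 / 2)) := by
    calc _ ≤ (ε : ℝ≥0∞) * μ {ω | (ε : ℝ) ≤ (range (N + 1)).sup' nonempty_range_add_one
            fun k => f k ω} := by gcongr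
      _ ≤ _ := hdoob
      _ ≤ _ := ENNReal.ofReal_le_ofReal <| (setIntegral_le_integral
            (hsum.integrable_exp_mul l) (ae_of_all _ fun ω => (exp_pos _).le)).trans hmgf
  have hε0 : (ε : ℝ≥0∞) ≠ 0 := by simp [ε, exp_pos]
  calc _ = (ε : ℝ≥0∞)⁻¹ * (ε * μ {ω | ∃ n ≤ N, t ≤ ∑ i ∈ Icc 1 n, X i ω}) := by
        rw [← mul_assoc, ENNReal.inv_mul_cancel hε0 ENNReal.coe_ne_top, one_mul]
    _ ≤ (ε : ℝ≥0∞)⁻¹ * ENNReal.ofReal (exp (N * c * l ^ 2 / 2)) := by gcongr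
    _ = _ := by
        rw [show (ε : ℝ≥0∞) = ENNReal.ofReal (exp (l * t)) from rfl,
          ← ENNReal.ofReal_inv_of_pos (exp_pos _), ← ENNReal.ofReal_mul (by positivity),
          ← exp_neg, ← exp_add]

lemma measure_exists_sum_ge_le (hmeas : ∀ i, Measurable (X i)) (hindep : iIndepFun X μ)
    {c : ℝ≥0} (hsub : ∀ i, HasSubgaussianMGF (X i) c μ) (hmean : ∀ i, μ[X i] = 0)
    (N : ℕ) {t : ℝ} (ht : 0 ≤ t) :
    μ {ω | ∃ n ≤ N, t ≤ ∑ i ∈ Icc 1 n, X i ω}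
      ≤ ENNReal.ofReal (exp (-t ^ 2 / (2 * N * c))) := by
  rcases (by positivity : (0 : ℝ) ≤ N * c).eq_or_lt with h0 | hpos
  · rw [mul_assoc, ← h0, mul_zero, div_zero, exp_zero, ENNReal.ofReal_one]
    exact prob_le_one
  · convert measure_exists_sum_ge_le_exp_mul hmeas hindep hsub hmean N t
      (l := t / (N * c)) (by positivity) using 3
    field_simp
    ring

lemma measure_exists_abs_sum_ge_le (hmeas : ∀ i, Measurable (X i)) (hindep : iIndepFun X μ)
    {c : ℝ≥0} (hsub : ∀ i, HasSubgaussianMGF (X i) c μ) (hmean : ∀ i, μ[X i] = 0)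
    (N : ℕ) {t : ℝ} (ht : 0 ≤ t) :
    μ {ω | ∃ n ≤ N, t ≤ |∑ i ∈ Icc 1 n, X i ω|}
      ≤ ENNReal.ofReal (2 * exp (-t ^ 2 / (2 * N * c))) := by
  have hneg := measure_exists_sum_ge_le (X := fun i ω => -X i ω) (fun i => (hmeas i).neg)
    (hindep.comp (fun _ x => -x) fun _ => measurable_neg) (fun i => (hsub i).neg)
    (fun i => by rw [integral_neg, hmean, neg_zero]) N ht
  calc _ ≤ μ ({ω | ∃ n ≤ N, t ≤ ∑ i ∈ Icc 1 n, X i ω}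
          ∪ {ω | ∃ n ≤ N, t ≤ ∑ i ∈ Icc 1 n, -X i ω}) := by
        refine measure_mono fun ω ⟨n, hn, hle⟩ => ?_
        rcases le_abs'.mp hle with h | h
        · exact Or.inr ⟨n, hn, by rw [sum_neg_distrib]; linarith⟩
        · exact Or.inl ⟨n, hn, h⟩
    _ ≤ _ := measure_union_le _ _
    _ ≤ _ := add_le_add (measure_exists_sum_ge_le hmeas hindep hsub hmean N ht) hneg
    _ = _ := by rw [← ENNReal.ofReal_add (exp_pos _).le (exp_pos _).le, ← two_mul]

end Maximal

lemma summable_add_one_rpow_neg {p : ℝ} (hp : 1 < p) :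
    Summable fun k : ℕ => ((k : ℝ) + 1) ^ (-p) := by
  simpa using (summable_nat_add_iff 1).mpr (summable_nat_rpow.mpr (by linarith : -p < -1))

lemma tsum_add_one_rpow_neg_le {p : ℝ} (hp : 1 < p) :
    ∑' k : ℕ, ((k : ℝ) + 1) ^ (-p) ≤ p / (p - 1) := by
  have hanti : AntitoneOn (fun x : ℝ => x ^ (-p)) (Set.Ici ((1 : ℕ) : ℝ)) :=
    fun x hx y _ hxy => rpow_le_rpow_of_nonpos (by simp_all; linarith) hxy (by linarith)
  have htail := hanti.tsum_comp_add_le_integral 1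
    (by simpa using integrableOn_Ioi_rpow_of_lt (by linarith : -p < -1) one_pos)
    fun x hx => rpow_nonneg (by simp_all; linarith) _
  rw [Nat.cast_one, integral_Ioi_rpow_of_lt (by linarith : -p < -1) one_pos, one_rpow] at htail
  push_cast at htail
  have hp1 : -p + 1 ≠ 0 := by linarith
  have hp2 : p - 1 ≠ 0 := by linarith
  calc _ = 1 + ∑' k : ℕ, ((k : ℝ) + 1 + 1) ^ (-p) := by
        rw [(summable_add_one_rpow_neg hp).tsum_eq_zero_add]; push_cast; rw [zero_add, one_rpow]
    _ ≤ 1 + -1 / (-p + 1) := by linarith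
    _ = p / (p - 1) := by field_simp; ring

lemma pow_floor_logb_le {a x : ℝ} (ha : 1 < a) (hx : 1 ≤ x) : a ^ ⌊logb a x⌋₊ ≤ x := by
  rw [← rpow_natCast, ← le_logb_iff_rpow_le ha (by linarith)]
  exact Nat.floor_le (logb_nonneg ha hx)

lemma lt_pow_floor_logb_add_one {a x : ℝ} (ha : 1 < a) (hx : 0 < x) :
    x < a ^ (⌊logb a x⌋₊ + 1) := by
  rw [← rpow_natCast, ← logb_lt_iff_lt_rpow ha hx]
  exact_mod_cast Nat.lt_floor_add_one _

-- `epoch n`, `epochEnd k` and `epochThreshold b k` are the `k`, `N_k` and `t_k` of the header.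
noncomputable def epoch (n : ℕ) : ℕ := ⌊logb (11 / 10) n⌋₊

noncomputable def epochEnd (k : ℕ) : ℕ := ⌊(11 / 10 : ℝ) ^ (k + 1)⌋₊

noncomputable def epochThreshold (b : ℝ) (k : ℕ) : ℝ :=
  √((11 / 10) ^ k * ((3 / 5) * log (k + 1) + b))

lemma le_epochEnd_epoch (n : ℕ) : n ≤ epochEnd (epoch n) := by
  rcases n.eq_zero_or_pos with rfl | hn
  · exact Nat.zero_le _
  · exact Nat.le_floor (lt_pow_floor_logb_add_one (by norm_num) (by exact_mod_cast hn)).le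

lemma epochThreshold_epoch_le_mul_epsb {b : ℝ} (hb : 0 ≤ b) {n : ℕ} (hn : 1 ≤ n) :
    epochThreshold b (epoch n) ≤ n * epsb b n := by
  have hn' : (1 : ℝ) ≤ n := by exact_mod_cast hn
  have hlogb : 0 ≤ logb (11 / 10) n := logb_nonneg (by norm_num) hn'
  have hk : ((epoch n : ℕ) : ℝ) ≤ logb (11 / 10) n := Nat.floor_le hlogb
  have hlog : log ((epoch n : ℝ) + 1) ≤ log (logb (11 / 10) n + 1) :=
    log_le_log (by positivity) (by linarith)
  have hmul : (n : ℝ) * epsb b n = √(n * ((3 / 5) * log (logb (11 / 10) n + 1) + b)) := by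
    rw [epsb, log_div_log, show (n : ℝ) * ((3 / 5) * log (logb (11 / 10) n + 1) + b)
        = (n : ℝ) ^ 2 * (((3 / 5) * log (logb (11 / 10) n + 1) + b) / n) by field_simp,
      sqrt_mul (sq_nonneg _), sqrt_sq (Nat.cast_nonneg _)]
  rw [hmul, epochThreshold]
  gcongr
  · have := log_nonneg (by linarith : (1 : ℝ) ≤ (epoch n : ℝ) + 1)
    positivity
  · exact pow_floor_logb_le (by norm_num) hn'

lemma natCast_mul_muhat {Ω : Type*} (Z : ℕ → Ω → ℝ) {n : ℕ} (hn : n ≠ 0) (ω : Ω) :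
    n * muhat Z n ω = ∑ i ∈ Icc 1 n, Z i ω := by
  rw [muhat, ← mul_assoc, mul_one_div_cancel (by exact_mod_cast hn), one_mul]

lemma epochThreshold_epoch_le_abs_sum {Ω : Type*} {Z : ℕ → Ω → ℝ} {b : ℝ} (hb : 0 ≤ b) {n : ℕ}
    (hn : 1 ≤ n) {ω : Ω} (h : epsb b n ≤ |muhat Z n ω|) :
    epochThreshold b (epoch n) ≤ |∑ i ∈ Icc 1 n, Z i ω| := by
  rw [← natCast_mul_muhat Z (by omega), abs_mul, Nat.abs_cast]
  exact (epochThreshold_epoch_le_mul_epsb hb hn).trans (by gcongr)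

lemma one_le_epochEnd (k : ℕ) : 1 ≤ epochEnd k :=
  Nat.le_floor (by push_cast; exact one_le_pow₀ (by norm_num))

lemma exp_neg_epochThreshold_sq_le {b : ℝ} (hb : 0 ≤ b) (k : ℕ) :
    exp (-epochThreshold b k ^ 2 / (2 * epochEnd k * (1 / 4)))
      ≤ exp (-9 * b / 5) * ((k : ℝ) + 1) ^ (-(12 / 11) : ℝ) := by
  have hc : 0 ≤ (3 / 5) * log ((k : ℝ) + 1) + b := by
    have := log_nonneg (by linarith [k.cast_nonneg (α := ℝ)] : (1 : ℝ) ≤ k + 1)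
    positivity
  have hN : (1 : ℝ) ≤ epochEnd k := by exact_mod_cast one_le_epochEnd k
  have hNu : (epochEnd k : ℝ) ≤ (11 / 10) ^ k * (11 / 10) :=
    (Nat.floor_le (by positivity)).trans_eq (pow_succ _ _)
  have hsq : epochThreshold b k ^ 2 = (11 / 10) ^ k * ((3 / 5) * log (k + 1) + b) :=
    sq_sqrt (by positivity)
  have hexp : -epochThreshold b k ^ 2 / (2 * epochEnd k * (1 / 4))
      ≤ -(12 / 11) * log ((k : ℝ) + 1) + -(20 / 11) * b := by
    rw [hsq, div_le_iff₀ (by positivity)]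
    nlinarith [pow_pos (by norm_num : (0 : ℝ) < 11 / 10) k]
  calc _ ≤ exp (-(12 / 11) * log ((k : ℝ) + 1) + -(20 / 11) * b) := exp_le_exp.mpr hexp
    _ ≤ _ := by
      rw [exp_add, mul_comm, rpow_def_of_pos (by positivity), mul_comm (log _)]
      gcongr
      linarith

lemma measure_epoch_le {Ω : Type*} [MeasurableSpace Ω] {μ : Measure Ω} [IsProbabilityMeasure μ]
    {X : ℕ → Ω → ℝ} (hmeas : ∀ i, Measurable (X i)) (hindep : iIndepFun X μ)
    (hsub : ∀ i, HasSubgaussianMGF (X i) (1 / 4) μ) (hmean : ∀ i, μ[X i] = 0)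
    {b : ℝ} (hb : 0 ≤ b) (k : ℕ) :
    μ {ω | ∃ n ≤ epochEnd k, epochThreshold b k ≤ |∑ i ∈ Icc 1 n, X i ω|}
      ≤ ENNReal.ofReal (2 * exp (-9 * b / 5) * ((k : ℝ) + 1) ^ (-(12 / 11) : ℝ)) := by
  refine (measure_exists_abs_sum_ge_le hmeas hindep hsub hmean (epochEnd k)
    (t := epochThreshold b k) (sqrt_nonneg _)).trans (ENNReal.ofReal_le_ofReal ?_)
  have hc : ((1 / 4 : ℝ≥0) : ℝ) = 1 / 4 := by norm_num
  rw [hc]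
  linarith [exp_neg_epochThreshold_sq_le hb k]

theorem adaptive_concentration_subgaussian_general
    {Ω : Type*} [MeasurableSpace Ω] (μ : Measure Ω) [IsProbabilityMeasure μ]
    (Z : ℕ → Ω → ℝ)
    (hmeas : ∀ i, Measurable (Z i))
    (hindep : iIndepFun Z μ)
    (hmean : ∀ i, ∫ ω, Z i ω ∂μ = 0)
    (hmgf_int : ∀ i (r : ℝ), Integrable (fun ω => Real.exp (r * Z i ω)) μ)
    (hsubg : ∀ i (r : ℝ), ∫ ω, Real.exp (r * Z i ω) ∂μ ≤ Real.exp (r ^ 2 / 8))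
    (J : Ω → ℕ∞)
    (hJ1 : ∀ ω, 1 ≤ J ω)
    (b : ℝ) (hb : 0 < b) :
    μ {ω | ∃ n : ℕ, J ω = (n : ℕ∞) ∧ epsb b n ≤ |muhat Z n ω|}
      ≤ ENNReal.ofReal (24 * Real.exp (-9 * b / 5)) := by
  have hsub : ∀ i, HasSubgaussianMGF (Z i) (1 / 4) μ := fun i =>
    ⟨hmgf_int i, fun r => (hsubg i r).trans_eq (by congr 1; push_cast; ring)⟩
  have htsum : ∑' k : ℕ, ((k : ℝ) + 1) ^ (-(12 / 11) : ℝ) ≤ 12 :=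
    (tsum_add_one_rpow_neg_le (by norm_num)).trans_eq (by norm_num)
  calc _ ≤ μ (⋃ k, {ω | ∃ n ≤ epochEnd k, epochThreshold b k ≤ |∑ i ∈ Icc 1 n, Z i ω|}) := by
        refine measure_mono fun ω ⟨n, hJn, h⟩ => Set.mem_iUnion.mpr
          ⟨epoch n, n, le_epochEnd_epoch n, epochThreshold_epoch_le_abs_sum hb.le ?_ h⟩
        exact_mod_cast hJn ▸ hJ1 ω
    _ ≤ ∑' k, μ {ω | ∃ n ≤ epochEnd k, epochThreshold b k ≤ |∑ i ∈ Icc 1 n, Z i ω|} :=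
        measure_iUnion_le _
    _ ≤ ∑' k : ℕ, ENNReal.ofReal (2 * exp (-9 * b / 5) * ((k : ℝ) + 1) ^ (-(12 / 11) : ℝ)) :=
        ENNReal.tsum_le_tsum fun k => measure_epoch_le hmeas hindep hsub hmean hb.le k
    _ = ENNReal.ofReal (∑' k : ℕ, 2 * exp (-9 * b / 5) * ((k : ℝ) + 1) ^ (-(12 / 11) : ℝ)) :=
        (ENNReal.ofReal_tsum_of_nonneg (fun k => by positivity)
          ((summable_add_one_rpow_neg (by norm_num)).mul_left _)).symm
    _ ≤ _ := ENNReal.ofReal_le_ofReal <| by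
        rw [tsum_mul_left]
        nlinarith [exp_pos (-9 * b / 5)]

/-- Adaptive concentration inequality for i.i.d. 1/2-subgaussian samples
(Theorem A.1 / Theorem `thm:concentration`). -/
theorem adaptive_concentration_subgaussian
    {Ω : Type*} [MeasurableSpace Ω] (μ : Measure Ω) [IsProbabilityMeasure μ]
    (Z : ℕ → Ω → ℝ)
    (hmeas : ∀ i, Measurable (Z i))
    (hindep : iIndepFun Z μ)
    (hident : ∀ i, IdentDistrib (Z i) (Z 0) μ μ)
    (hint : ∀ i, Integrable (Z i) μ)
    (hmean : ∀ i, ∫ ω, Z i ω ∂μ = 0)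
    (hmgf_int : ∀ i (r : ℝ), Integrable (fun ω => Real.exp (r * Z i ω)) μ)
    (hsubg : ∀ i (r : ℝ), ∫ ω, Real.exp (r * Z i ω) ∂μ ≤ Real.exp (r ^ 2 / 8))
    (J : Ω → ℕ∞)
    (hJ1 : ∀ ω, 1 ≤ J ω)
    (hJstop : ∀ n : ℕ, MeasurableSet[MeasurableSpace.comap
        (fun ω (i : Fin n) => Z ((i : ℕ) + 1) ω) inferInstance] {ω | J ω = (n : ℕ∞)})
    (b : ℝ) (hb : 0 < b) :
    μ {ω | ∃ n : ℕ, J ω = (n : ℕ∞) ∧ epsb b n ≤ |muhat Z n ω|}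
      ≤ ENNReal.ofReal (24 * Real.exp (-9 * b / 5)) :=
  adaptive_concentration_subgaussian_general μ Z hmeas hindep hmean hmgf_int hsubg J hJ1 b hb
end

section
/- Let E_maj, E_min, μ_maj, μ_min ∈ ℝ, let ε_maj, ε_min ≥ 0, and let c ∈ ℝ. Suppose |E_maj − μ_maj| ≤ ε_maj, |E_min − μ_min| ≤ ε_min, and |E_maj| > ε_maj. Define E_parity = E_min · E_maj⁻¹ − (1 − c) and ε_parity = |E_maj|⁻¹ · ε_min + ε_maj · (|E_min| + ε_min) / (|E_maj| · (|E_maj| − ε_maj)). Then μ_maj ≠ 0, and: (i) if E_parity − ε_parity ≥ 0 then μ_min / μ_maj − (1 − c) ≥ 0; (ii) if E_parity + ε_parity < 0 then μ_min / μ_maj − (1 − c) < 0. -/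
/-- Derived verification rule for the demographic parity specification
`μ_min / μ_maj ≥ 1 − c`, obtained by composing the deterministic error-propagation
bounds for inverse, product, sum, and inequality. -/
theorem demographic_parity_rule
    (Emaj Emin μmaj μmin εmaj εmin c : ℝ)
    (hεmaj : 0 ≤ εmaj) (hεmin : 0 ≤ εmin)
    (hmaj : |Emaj - μmaj| ≤ εmaj) (hmin : |Emin - μmin| ≤ εmin)
    (hside : εmaj < |Emaj|) :
    μmaj ≠ 0 ∧
    (Emin * Emaj⁻¹ - (1 - c)
        - (|Emaj|⁻¹ * εmin + εmaj * (|Emin| + εmin) / (|Emaj| * (|Emaj| - εmaj))) ≥ 0 →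
      μmin / μmaj - (1 - c) ≥ 0) ∧
    (Emin * Emaj⁻¹ - (1 - c)
        + (|Emaj|⁻¹ * εmin + εmaj * (|Emin| + εmin) / (|Emaj| * (|Emaj| - εmaj))) < 0 →
      μmin / μmaj - (1 - c) < 0) := by
  have haE : (0:ℝ) < |Emaj| := lt_of_le_of_lt hεmaj hside
  have haE0 : Emaj ≠ 0 := by
    intro h; simp [h] at haE
  have hμabs : |Emaj| - εmaj ≤ |μmaj| := by
    have := abs_sub_abs_le_abs_sub Emaj μmaj
    linarith
  have hμpos : (0:ℝ) < |μmaj| := lt_of_lt_of_le (by linarith) hμabs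
  have hμ0 : μmaj ≠ 0 := by
    intro h; simp [h] at hμpos
  have hμminabs : |μmin| ≤ |Emin| + εmin := by
    have := abs_sub_abs_le_abs_sub μmin Emin
    rw [abs_sub_comm] at this
    linarith
  -- key bound
  have hid : Emin * Emaj⁻¹ - μmin / μmaj
      = (Emin - μmin) / Emaj + μmin * (μmaj - Emaj) / (Emaj * μmaj) := by
    field_simp
    ring
  have hkey : |Emin * Emaj⁻¹ - μmin / μmaj|
      ≤ |Emaj|⁻¹ * εmin + εmaj * (|Emin| + εmin) / (|Emaj| * (|Emaj| - εmaj)) := by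
    rw [hid]
    refine le_trans (abs_add_le _ _) ?_
    have h1 : |(Emin - μmin) / Emaj| ≤ |Emaj|⁻¹ * εmin := by
      rw [abs_div]
      rw [div_le_iff₀ haE]
      calc |Emin - μmin| ≤ εmin := hmin
        _ ≤ |Emaj|⁻¹ * εmin * |Emaj| := by
            rw [mul_comm, ← mul_assoc, mul_inv_cancel₀ (ne_of_gt haE), one_mul]
    have h2 : |μmin * (μmaj - Emaj) / (Emaj * μmaj)|
        ≤ εmaj * (|Emin| + εmin) / (|Emaj| * (|Emaj| - εmaj)) := by
      rw [abs_div, abs_mul, abs_mul]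
      have hden : (0:ℝ) < |Emaj| * |μmaj| := mul_pos haE hμpos
      have hden2 : (0:ℝ) < |Emaj| * (|Emaj| - εmaj) := mul_pos haE (by linarith)
      rw [div_le_div_iff₀ hden hden2]
      have hE : |μmaj - Emaj| ≤ εmaj := by rw [abs_sub_comm]; exact hmaj
      have hEminpos : (0:ℝ) ≤ |Emin| + εmin := by positivity
      calc |μmin| * |μmaj - Emaj| * (|Emaj| * (|Emaj| - εmaj))
          ≤ (|Emin| + εmin) * εmaj * (|Emaj| * |μmaj|) := by
            apply mul_le_mul
            · exact mul_le_mul hμminabs hE (abs_nonneg _) hEminpos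
            · exact mul_le_mul_of_nonneg_left hμabs (le_of_lt haE)
            · positivity
            · positivity
        _ = εmaj * (|Emin| + εmin) * (|Emaj| * |μmaj|) := by ring
    linarith
  refine ⟨hμ0, ?_, ?_⟩ <;> intro h <;>
    first
    | (have := (abs_le.mp hkey).2; linarith)
    | (have := (abs_le.mp hkey).1; linarith)
end
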